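/- Let L = ℤ³ with the symmetric bilinear form b(v, w) = vᵀ G w given by the Gram matrix G = [[4,1,0],[1,4,0],[0,0,−2]], and let L∨ = {v ∈ ℚ³ : vᵀ G x ∈ ℤ for all x ∈ ℤ³} be the dual lattice. Then the quotient group L∨/L is cyclic of order 30, generated by the class of f₁ = (4/15, −1/15, 1/2), and b(f₁, f₁) = −7/30, which is congruent to 53/30 modulo 2ℤ. -/

import Mathlib

open Matrix

/-- The natural `ℤ`-linear embedding of `ℤ³` into `ℚ³`. -/
def castLM : (Fin 3 → ℤ) →ₗ[ℤ] (Fin 3 → ℚ) where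
  toFun x := fun i => (x i : ℚ)
  map_add' x y := by funext i; simp
  map_smul' c x := by funext i; simp [zsmul_eq_mul]

/-- The Gram matrix of the transcendental lattice `T₀` of the general `K3`-surface
in the family `Y_{λ, T×V}`. -/
def T₀ : Matrix (Fin 3) (Fin 3) ℚ := !![4, 1, 0; 1, 4, 0; 0, 0, -2]

/-- The dual lattice `L∨ = {v ∈ ℚ³ : vᵀ G x ∈ ℤ for all x ∈ ℤ³}` of `L = ℤ³` with
bilinear form given by the Gram matrix `G`. -/
def dualLattice (G : Matrix (Fin 3) (Fin 3) ℚ) : Submodule ℤ (Fin 3 → ℚ) where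
  carrier := {v | ∀ x : Fin 3 → ℤ, ∃ k : ℤ, v ⬝ᵥ G.mulVec (castLM x) = (k : ℚ)}
  zero_mem' := fun x => ⟨0, by simp⟩
  add_mem' := by
    intro v w hv hw x
    obtain ⟨k, hk⟩ := hv x
    obtain ⟨l, hl⟩ := hw x
    exact ⟨k + l, by rw [add_dotProduct, hk, hl]; push_cast; ring⟩
  smul_mem' := by
    intro c v hv x
    obtain ⟨k, hk⟩ := hv x
    exact ⟨c * k, by rw [smul_dotProduct, hk, zsmul_eq_mul]; push_cast; ring⟩

/-- The vector `f₁ = (4/15, -1/15, 1/2)`. -/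
def f₁ : Fin 3 → ℚ := ![4/15, -1/15, 1/2]

/-!
A vector `v ∈ ℚ³` is dual exactly when `vᵀ T₀ ∈ ℤ³`. Writing `vᵀ T₀ = (a, b, c)` gives
`v = ((4a - b)/15, (4b - a)/15, -c/2)`, so modulo `ℤ³` the class of `v` only depends on
`a - 4b mod 15` and `c mod 2`; by the Chinese remainder theorem it is a multiple of the class of
`f₁`, whose coordinates have denominators `15` and `2`, hence whose order is `30`.
-/

abbrev discriminantGroup (G : Matrix (Fin 3) (Fin 3) ℚ) : Type :=
  dualLattice G ⧸ (LinearMap.range castLM).comap (dualLattice G).subtype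

lemma castLM_apply (x : Fin 3 → ℤ) (i : Fin 3) : castLM x i = x i := rfl

lemma mem_dualLattice_iff (G : Matrix (Fin 3) (Fin 3) ℚ) (v : Fin 3 → ℚ) :
    v ∈ dualLattice G ↔ ∀ i, ∃ k : ℤ, (v ᵥ* G) i = k := by
  refine ⟨fun hv i => ?_, fun hv x => ?_⟩
  · obtain ⟨k, hk⟩ := hv (Pi.single i 1)
    refine ⟨k, ?_⟩
    rwa [dotProduct_mulVec, show castLM (Pi.single i 1) = Pi.single i 1 by
      ext j; simp [castLM_apply, Pi.single_apply], dotProduct_single_one] at hk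
  · choose k hk using hv
    refine ⟨∑ i, k i * x i, ?_⟩
    rw [dotProduct_mulVec]
    simp [dotProduct, castLM_apply, hk]

lemma mk_eq_zero_iff {G : Matrix (Fin 3) (Fin 3) ℚ} (z : dualLattice G) :
    (Submodule.Quotient.mk z : discriminantGroup G) = 0 ↔
      (z : Fin 3 → ℚ) ∈ LinearMap.range castLM := by
  rw [Submodule.Quotient.mk_eq_zero, Submodule.mem_comap, Submodule.subtype_apply]

lemma addOrderOf_eq_of_zsmul_eq_zero_iff {A : Type*} [AddGroup A] {c : A} {n : ℕ}
    (h : ∀ m : ℤ, m • c = 0 ↔ (n : ℤ) ∣ m) : addOrderOf c = n := by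
  have hdvd (m : ℤ) : (addOrderOf c : ℤ) ∣ m ↔ (n : ℤ) ∣ m := by
    rw [addOrderOf_dvd_iff_zsmul_eq_zero, h]
  exact Nat.dvd_antisymm (Int.natCast_dvd_natCast.mp ((hdvd n).mpr dvd_rfl))
    (Int.natCast_dvd_natCast.mp ((hdvd _).mp dvd_rfl))

lemma vecMul_T₀ (v : Fin 3 → ℚ) : v ᵥ* T₀ = ![4 * v 0 + v 1, v 0 + 4 * v 1, -2 * v 2] := by
  ext i; fin_cases i <;> simp [T₀, vecMul, dotProduct, Fin.sum_univ_three] <;> ring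

lemma f₁_vecMul_T₀ : f₁ ᵥ* T₀ = ![1, 0, -1] := by
  rw [vecMul_T₀]; ext i; fin_cases i <;> simp [f₁] <;> norm_num

lemma f₁_mem_dualLattice : f₁ ∈ dualLattice T₀ := by
  rw [mem_dualLattice_iff, f₁_vecMul_T₀]
  intro i
  fin_cases i
  exacts [⟨1, by simp⟩, ⟨0, by simp⟩, ⟨-1, by simp⟩]

lemma exists_sub_zsmul_f₁_mem_range {v : Fin 3 → ℚ} (hv : v ∈ dualLattice T₀) :
    ∃ m : ℤ, v - m • f₁ ∈ LinearMap.range castLM := by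
  rw [mem_dualLattice_iff, vecMul_T₀] at hv
  obtain ⟨a, ha⟩ := hv 0
  obtain ⟨b, hb⟩ := hv 1
  obtain ⟨c, hc⟩ := hv 2
  simp only [cons_val] at ha hb hc
  -- `m` solves `m ≡ a - 4b [ZMOD 15]` and `m ≡ c [ZMOD 2]`
  refine ⟨16 * a - 64 * b + 15 * c,
    ![-4 * a + 17 * b - 4 * c, a - 4 * b + c, -8 * a + 32 * b - 8 * c], ?_⟩
  ext i
  fin_cases i <;>
    simp only [castLM_apply, f₁, Pi.sub_apply, smul_cons, smul_empty, zsmul_eq_mul, Fin.zero_eta,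
      Fin.mk_one, Fin.reduceFinMk, cons_val, push_cast]
  · linear_combination (-4/15 : ℚ) * ha + (1/15 : ℚ) * hb
  · linear_combination (1/15 : ℚ) * ha + (-4/15 : ℚ) * hb
  · linear_combination (1/2 : ℚ) * hc

lemma zsmul_f₁_mem_range_iff (m : ℤ) : m • f₁ ∈ LinearMap.range castLM ↔ (30 : ℤ) ∣ m := by
  constructor
  · rintro ⟨x, hx⟩
    have h1 := congrFun hx 1
    have h2 := congrFun hx 2
    simp only [castLM_apply, f₁, Pi.smul_apply, zsmul_eq_mul, cons_val] at h1 h2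
    have d1 : 15 * x 1 = -m := by
      exact_mod_cast (by linear_combination 15 * h1 : (15 * x 1 : ℚ) = -m)
    have d2 : 2 * x 2 = m := by
      exact_mod_cast (by linear_combination 2 * h2 : (2 * x 2 : ℚ) = m)
    omega
  · rintro ⟨k, rfl⟩
    refine ⟨k • ![8, -2, 15], ?_⟩
    ext i
    fin_cases i <;> simp [castLM_apply, f₁] <;> ring

def f₁Class : discriminantGroup T₀ := Submodule.Quotient.mk ⟨f₁, f₁_mem_dualLattice⟩

lemma exists_eq_zsmul_f₁Class (ξ : discriminantGroup T₀) : ∃ m : ℤ, ξ = m • f₁Class := by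
  obtain ⟨⟨v, hv⟩, rfl⟩ := Submodule.Quotient.mk_surjective _ ξ
  obtain ⟨m, hm⟩ := exists_sub_zsmul_f₁_mem_range hv
  exact ⟨m, by rw [f₁Class, ← Submodule.Quotient.mk_smul, ← sub_eq_zero,
    ← Submodule.Quotient.mk_sub, mk_eq_zero_iff]; exact hm⟩

lemma addOrderOf_f₁Class : addOrderOf f₁Class = 30 :=
  addOrderOf_eq_of_zsmul_eq_zero_iff fun m => by
    rw [f₁Class, ← Submodule.Quotient.mk_smul, mk_eq_zero_iff]
    exact zsmul_f₁_mem_range_iff m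

/-- For `L = ℤ³` with the bilinear form `b` given by the Gram matrix
`[[4,1,0],[1,4,0],[0,0,-2]]`, the discriminant group `L∨/L` is cyclic of order
`30`, generated by the class of `f₁ = (4/15, -1/15, 1/2)`; moreover
`b(f₁,f₁) = -7/30 ≡ 53/30 (mod 2ℤ)`. -/
theorem discriminant_group_TxV :
    ∃ hf : f₁ ∈ dualLattice T₀,
      f₁ ⬝ᵥ T₀.mulVec f₁ = -7/30 ∧
      (∃ k : ℤ, (-7/30 : ℚ) = 53/30 + 2 * (k : ℚ)) ∧
      Nat.card
        ((↥(dualLattice T₀)) ⧸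
          (Submodule.comap (dualLattice T₀).subtype (LinearMap.range castLM))) = 30 ∧
      ∀ ξ : (↥(dualLattice T₀)) ⧸
          (Submodule.comap (dualLattice T₀).subtype (LinearMap.range castLM)),
        ∃ m : ℤ,
          ξ = m • (Submodule.Quotient.mk (⟨f₁, hf⟩ : ↥(dualLattice T₀))) := by
  refine ⟨f₁_mem_dualLattice, ?_, ⟨-1, by norm_num⟩, ?_, exists_eq_zsmul_f₁Class⟩
  · rw [dotProduct_mulVec, f₁_vecMul_T₀]
    simp [f₁, dotProduct, Fin.sum_univ_three]
    norm_num
  · have hgen (ξ : discriminantGroup T₀) : ξ ∈ AddSubgroup.zmultiples f₁Class := by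
      obtain ⟨m, rfl⟩ := exists_eq_zsmul_f₁Class ξ
      exact ⟨m, rfl⟩
    rw [← addOrderOf_eq_card_of_forall_mem_zmultiples hgen, addOrderOf_f₁Class]
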